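/- arXiv:1910.09310 — 3 statements merged into one kernel-verified Lean document; each statement's English description precedes it below -/
import Mathlib

section
/- For x, y, z ∈ ℝ² distinct, the cyclic sum S = Σ_cyc (x-y)·(x-z) / (|x-y|² |x-z|²) equals 2 sin²(φ)/|y-z|², where φ is the angle at x between x-y and x-z; equivalently S = (1/2) ℛ(x,y,z)^{-2} where ℛ is the circumradius, and hence |S| ≤ (9/2) ρ(x,y,z)^{-2} with ρ² = |x-y|² + |y-z|² + |z-x|². -/
/-! With `a = y - x` and `b = z - x` the three terms add up to
`2 (‖a‖²‖b‖² - ⟪a, b⟫²) / (‖a‖²‖b‖²‖a - b‖²) = 2 sin² ∠yxz / ‖y - z‖²`, and the law of sines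
`‖y - z‖ = 2ℛ sin ∠yxz` turns this into `1 / (2ℛ²)`. For the bound, let `u, v, w` be the vectors
from the circumcentre to the vertices: then `‖u - v‖² + ‖v - w‖² + ‖w - u‖² + ‖u + v + w‖² = 9ℛ²`,
so `ρ² ≤ 9ℛ²`. -/

open RealInnerProductSpace
noncomputable section

abbrev E2 := EuclideanSpace ℝ (Fin 2)

open EuclideanGeometry InnerProductGeometry

section InnerProductSpace

variable {V : Type*} [NormedAddCommGroup V] [InnerProductSpace ℝ V]

def cyclicSum (x y z : V) : ℝ :=
  ⟪x - y, x - z⟫ / (‖x - y‖ ^ 2 * ‖x - z‖ ^ 2)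
    + ⟪y - z, y - x⟫ / (‖y - z‖ ^ 2 * ‖y - x‖ ^ 2)
    + ⟪z - x, z - y⟫ / (‖z - x‖ ^ 2 * ‖z - y‖ ^ 2)

theorem cyclicSum_eq_two_mul_sin_angle_sq_div {x y z : V} (hxy : x ≠ y) (hxz : x ≠ z)
    (hyz : y ≠ z) : cyclicSum x y z = 2 * Real.sin (∠ y x z) ^ 2 / ‖y - z‖ ^ 2 := by
  obtain ⟨a, rfl⟩ : ∃ a, y = x + a := ⟨y - x, by abel⟩
  obtain ⟨b, rfl⟩ : ∃ b, z = x + b := ⟨z - x, by abel⟩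
  have ha : ‖a‖ ≠ 0 := by simpa using hxy.symm
  have hb : ‖b‖ ≠ 0 := by simpa using hxz.symm
  have hab : ‖a - b‖ ≠ 0 := by simpa [sub_eq_zero] using hyz
  simp only [cyclicSum, EuclideanGeometry.angle, vsub_eq_sub, add_sub_cancel_left,
    sub_add_cancel_left, add_sub_add_left_eq_sub, Real.sin_sq, cos_angle, norm_neg,
    inner_neg_left, inner_neg_right, neg_neg, inner_sub_left, inner_sub_right,
    real_inner_self_eq_norm_sq, norm_sub_rev b a, real_inner_comm a b]
  field_simp
  rw [norm_sub_sq_real]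
  ring

theorem norm_sub_sq_add_norm_sub_sq_add_norm_sub_sq_add_norm_add_add_sq (u v w : V) :
    ‖u - v‖ ^ 2 + ‖v - w‖ ^ 2 + ‖w - u‖ ^ 2 + ‖u + v + w‖ ^ 2
      = 3 * (‖u‖ ^ 2 + ‖v‖ ^ 2 + ‖w‖ ^ 2) := by
  simp only [norm_sub_sq_real, norm_add_sq_real, inner_add_left, real_inner_comm u w]
  ring

end InnerProductSpace

namespace Affine.Triangle

variable {V P : Type*} [NormedAddCommGroup V] [InnerProductSpace ℝ V] [MetricSpace P]
  [NormedAddTorsor V P]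

theorem dist_sq_add_dist_sq_add_dist_sq_le_nine_mul_circumradius_sq (t : Triangle ℝ P) :
    dist (t.points 0) (t.points 1) ^ 2 + dist (t.points 1) (t.points 2) ^ 2
      + dist (t.points 2) (t.points 0) ^ 2 ≤ 9 * t.circumradius ^ 2 := by
  have hR (i : Fin 3) : ‖t.points i -ᵥ t.circumcenter‖ = t.circumradius := by
    rw [← dist_eq_norm_vsub, t.dist_circumcenter_eq_circumradius]
  have hd (i j : Fin 3) : dist (t.points i) (t.points j)
      = ‖(t.points i -ᵥ t.circumcenter) - (t.points j -ᵥ t.circumcenter)‖ := by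
    rw [vsub_sub_vsub_cancel_right, dist_eq_norm_vsub]
  have hsum := norm_sub_sq_add_norm_sub_sq_add_norm_sub_sq_add_norm_add_add_sq
    (t.points 0 -ᵥ t.circumcenter) (t.points 1 -ᵥ t.circumcenter) (t.points 2 -ᵥ t.circumcenter)
  rw [hR, hR, hR] at hsum
  rw [hd, hd, hd]
  linarith [sq_nonneg ‖(t.points 0 -ᵥ t.circumcenter) + (t.points 1 -ᵥ t.circumcenter)
    + (t.points 2 -ᵥ t.circumcenter)‖]

theorem cyclicSum_eq_half_inv_circumradius_sq (t : Triangle ℝ V) :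
    cyclicSum (t.points 0) (t.points 1) (t.points 2) = 1 / 2 * (t.circumradius⁻¹) ^ 2 := by
  have hsine := t.dist_div_sin_angle_eq_two_mul_circumradius (i₁ := 1) (i₂ := 0) (i₃ := 2)
    (by decide) (by decide) (by decide)
  have hsin : Real.sin (∠ (t.points 1) (t.points 0) (t.points 2)) ≠ 0 := by
    intro h0
    rw [h0, div_zero] at hsine
    linarith [t.circumradius_pos]
  rw [cyclicSum_eq_two_mul_sin_angle_sq_div (t.independent.injective.ne (by decide))
    (t.independent.injective.ne (by decide)) (t.independent.injective.ne (by decide)),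
    ← dist_eq_norm, (div_eq_iff hsin).1 hsine]
  field_simp

end Affine.Triangle

/-- The cyclic sum `S = Σ_cyc (x-y)·(x-z)/(|x-y|²|x-z|²)` equals `2 sin²φ/|y-z|²`
(`φ` the angle at `x`), equals `(1/2)ℛ⁻²`, and satisfies `|S| ≤ (9/2)ρ⁻²`. -/
theorem cyclic_sum_circumradius (x y z : E2)
    (h : AffineIndependent ℝ ![x, y, z]) :
    (⟪x - y, x - z⟫ / (‖x - y‖ ^ 2 * ‖x - z‖ ^ 2)
      + ⟪y - z, y - x⟫ / (‖y - z‖ ^ 2 * ‖y - x‖ ^ 2)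
      + ⟪z - x, z - y⟫ / (‖z - x‖ ^ 2 * ‖z - y‖ ^ 2)
        = 2 * Real.sin (EuclideanGeometry.angle y x z) ^ 2 / ‖y - z‖ ^ 2)
    ∧ (⟪x - y, x - z⟫ / (‖x - y‖ ^ 2 * ‖x - z‖ ^ 2)
      + ⟪y - z, y - x⟫ / (‖y - z‖ ^ 2 * ‖y - x‖ ^ 2)
      + ⟪z - x, z - y⟫ / (‖z - x‖ ^ 2 * ‖z - y‖ ^ 2)
        = (1 / 2) * ((Affine.Simplex.circumradius ⟨![x, y, z], h⟩)⁻¹) ^ 2)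
    ∧ |⟪x - y, x - z⟫ / (‖x - y‖ ^ 2 * ‖x - z‖ ^ 2)
      + ⟪y - z, y - x⟫ / (‖y - z‖ ^ 2 * ‖y - x‖ ^ 2)
      + ⟪z - x, z - y⟫ / (‖z - x‖ ^ 2 * ‖z - y‖ ^ 2)|
        ≤ (9 / 2) / (‖x - y‖ ^ 2 + ‖y - z‖ ^ 2 + ‖z - x‖ ^ 2) := by
  let t : Affine.Triangle ℝ E2 := ⟨![x, y, z], h⟩
  have hxy : x ≠ y := h.injective.ne (show (0 : Fin 3) ≠ 1 by decide)
  have hxz : x ≠ z := h.injective.ne (show (0 : Fin 3) ≠ 2 by decide)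
  have hyz : y ≠ z := h.injective.ne (show (1 : Fin 3) ≠ 2 by decide)
  have hS : cyclicSum x y z = 1 / 2 * (t.circumradius⁻¹) ^ 2 :=
    t.cyclicSum_eq_half_inv_circumradius_sq
  have hsides : ‖x - y‖ ^ 2 + ‖y - z‖ ^ 2 + ‖z - x‖ ^ 2 ≤ 9 * t.circumradius ^ 2 := by
    have hdist := t.dist_sq_add_dist_sq_add_dist_sq_le_nine_mul_circumradius_sq
    simp only [dist_eq_norm] at hdist
    exact hdist
  refine ⟨cyclicSum_eq_two_mul_sin_angle_sq_div hxy hxz hyz, hS, ?_⟩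
  have hR := t.circumradius_pos
  have hxy' : 0 < ‖x - y‖ := norm_pos_iff.2 (sub_ne_zero.2 hxy)
  change |cyclicSum x y z| ≤ _
  rw [hS, abs_of_nonneg (by positivity), le_div_iff₀ (by positivity)]
  field_simp
  linarith
end
end

section
/- Let v(r) be the radial profile of |∇w_R|, i.e. v(|x|) = |x|/(πR²) for |x| ≤ R, v(|x|) = (1/|x|)∫_{B(0,|x|)}χ_R for R < |x| < 2R, and v(|x|) = 1/|x| for |x| ≥ 2R. Then there exists a constant C, independent of R, such that for all distinct x, y, z ∈ ℝ², the cyclic sum |Σ_cyc ((x-y)/|x-y|)·((x-z)/|x-z|) v(|x-y|) v(|x-z|)| ≤ C / ρ(x,y,z)², where ρ² = |x-y|² + |y-z|² + |z-x|². -/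
open MeasureTheory RealInnerProductSpace
noncomputable section

open Real


set_option maxHeartbeats 1000000

lemma key_scalar (v : ℝ → ℝ) (L : ℝ) (hL : 1 ≤ L)
    (hv0 : ∀ r, 0 < r → 0 ≤ v r)
    (hv1 : ∀ r, 0 < r → r * v r ≤ 1)
    (hvlip : ∀ t s : ℝ, 0 < t → t ≤ s → |v s - v t| ≤ L * (s - t) / t ^ 2)
    (a b c k : ℝ) (ha : 0 < a) (hb : 0 < b) (hc : 0 < c)
    (hab : a ≤ b) (hac : a ≤ c)
    (hk1 : |k| ≤ a * c) (hk2 : |a ^ 2 - k| ≤ b * a) (hk3 : |c ^ 2 - k| ≤ c * b)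
    (hbc : |b - c| ≤ a) :
    |k / (a * c) * v a * v c + (a ^ 2 - k) / (b * a) * v b * v a
      + (c ^ 2 - k) / (c * b) * v c * v b| ≤ (24 * L + 24) / (a ^ 2 + b ^ 2 + c ^ 2) := by
  have hA0 := hv0 a ha
  have hB0 := hv0 b hb
  have hC0 := hv0 c hc
  have hA1 := hv1 a ha
  have hB1 := hv1 b hb
  have hC1 := hv1 c hc
  have hL0 : (0:ℝ) ≤ L := by linarith
  have hb2c : b ≤ 2 * c := by
    have : b - c ≤ a := (abs_le.1 hbc).2
    linarith
  have hc2b : c ≤ 2 * b := by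
    have : -a ≤ b - c := (abs_le.1 hbc).1
    linarith
  -- bound |v c - v b| ≤ 4 L a / b^2
  have hCB : |v c - v b| ≤ 4 * L * a / b ^ 2 := by
    rcases le_total b c with h | h
    · have h0 := hvlip b c hb h
      have hcb : c - b ≤ a := by have := (abs_le.1 hbc).1; linarith
      have h1 : L * (c - b) / b ^ 2 ≤ 4 * L * a / b ^ 2 := by
        rw [div_le_div_iff₀ (by positivity) (by positivity)]
        nlinarith [mul_le_mul_of_nonneg_right (mul_le_mul_of_nonneg_left hcb hL0) (sq_nonneg b),
          mul_nonneg (mul_nonneg hL0 ha.le) (sq_nonneg b)]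
      exact h0.trans h1
    · have h0 := hvlip c b hc h
      have hba : b - c ≤ a := (abs_le.1 hbc).2
      have h1 : L * (b - c) / c ^ 2 ≤ 4 * L * a / b ^ 2 := by
        rw [div_le_div_iff₀ (by positivity) (by positivity)]
        have e1 : L * (b - c) ≤ L * a := mul_le_mul_of_nonneg_left hba hL0
        have e2 : b ^ 2 ≤ 4 * c ^ 2 := by nlinarith
        nlinarith [mul_le_mul_of_nonneg_left e2 (mul_nonneg hL0 ha.le),
          mul_le_mul_of_nonneg_right e1 (sq_nonneg b)]
      calc |v c - v b| = |v b - v c| := by rw [abs_sub_comm]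
        _ ≤ L * (b - c) / c ^ 2 := h0
        _ ≤ 4 * L * a / b ^ 2 := h1
  -- third term
  have h3 : |(c ^ 2 - k) / (c * b) * v c * v b| ≤ 2 / b ^ 2 := by
    have hvc : v c ≤ 1 / c := by rw [le_div_iff₀ hc]; linarith
    have hvb : v b ≤ 1 / b := by rw [le_div_iff₀ hb]; linarith
    have habs : |(c ^ 2 - k) / (c * b)| ≤ 1 := by
      rw [abs_div, abs_of_pos (mul_pos hc hb), div_le_one (mul_pos hc hb)]
      exact hk3
    have step : |(c ^ 2 - k) / (c * b) * v c * v b| ≤ 1 * v c * v b := by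
      rw [abs_mul, abs_mul, abs_of_nonneg hC0, abs_of_nonneg hB0]
      exact mul_le_mul_of_nonneg_right (mul_le_mul_of_nonneg_right habs hC0) hB0
    refine step.trans ?_
    calc 1 * v c * v b ≤ (1/c) * (1/b) := by
          apply mul_le_mul (by simpa using hvc) hvb hB0 (by positivity)
      _ ≤ 2 / b ^ 2 := by
          rw [div_mul_div_comm, one_mul, div_le_div_iff₀ (by positivity) (by positivity)]
          nlinarith
  -- first two terms
  have h12 : |k / (a * c) * v a * v c + (a ^ 2 - k) / (b * a) * v b * v a|
      ≤ (4 * L + 2) / b ^ 2 := by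
    have hid : k / (a * c) * v a * v c + (a ^ 2 - k) / (b * a) * v b * v a
        = v a * ((k / a) * (v c / c - v b / b) + (a / b) * v b) := by
      field_simp
      ring
    rw [hid]
    have hX : |(k / a) * (v c / c - v b / b) + (a / b) * v b|
        ≤ c * |v c / c - v b / b| + a / b ^ 2 := by
      have h1 : |(k / a) * (v c / c - v b / b)| ≤ c * |v c / c - v b / b| := by
        rw [abs_mul]
        apply mul_le_mul_of_nonneg_right _ (abs_nonneg _)
        rw [abs_div, abs_of_pos ha, div_le_iff₀ ha]
        calc |k| ≤ a * c := hk1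
          _ = c * a := by ring
      have h2 : |(a / b) * v b| ≤ a / b ^ 2 := by
        rw [abs_mul, abs_of_pos (by positivity), abs_of_nonneg hB0]
        rw [div_mul_eq_mul_div, div_le_div_iff₀ hb (by positivity)]
        nlinarith [mul_le_mul_of_nonneg_left hB1 ha.le]
      calc |(k / a) * (v c / c - v b / b) + (a / b) * v b|
          ≤ |(k / a) * (v c / c - v b / b)| + |(a / b) * v b| := abs_add_le _ _
        _ ≤ c * |v c / c - v b / b| + a / b ^ 2 := by linarith
    have hY : c * |v c / c - v b / b| ≤ |v c - v b| + a / b ^ 2 := by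
      have hid2 : v c / c - v b / b = (v c - v b) / c + v b * (1 / c - 1 / b) := by
        field_simp; ring
      rw [hid2]
      have h1 : |(v c - v b) / c| = |v c - v b| / c := by
        rw [abs_div, abs_of_pos hc]
      have h2 : |v b * (1 / c - 1 / b)| ≤ (1 / b) * (a / (b * c)) := by
        rw [abs_mul, abs_of_nonneg hB0]
        have hvb : v b ≤ 1 / b := by rw [le_div_iff₀ hb]; linarith
        have h3 : |1 / c - 1 / b| = |b - c| / (b * c) := by
          rw [div_sub_div _ _ (ne_of_gt hc) (ne_of_gt hb), abs_div,
            abs_of_pos (mul_pos hc hb)]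
          rw [show (1:ℝ) * b - c * 1 = b - c by ring, show c * b = b * c by ring]
        rw [h3]
        exact mul_le_mul hvb (div_le_div_of_nonneg_right hbc (by positivity))
          (by positivity) (by positivity)
      calc c * |(v c - v b) / c + v b * (1 / c - 1 / b)|
          ≤ c * (|(v c - v b) / c| + |v b * (1 / c - 1 / b)|) := by
            apply mul_le_mul_of_nonneg_left (abs_add_le _ _) (le_of_lt hc)
        _ ≤ c * (|v c - v b| / c + (1 / b) * (a / (b * c))) := by
            apply mul_le_mul_of_nonneg_left _ (le_of_lt hc)
            rw [h1]; linarith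
        _ = |v c - v b| + a / (b ^ 2) * (c / c) := by field_simp
        _ = |v c - v b| + a / b ^ 2 := by rw [div_self (ne_of_gt hc), mul_one]
    have hXfull : |(k / a) * (v c / c - v b / b) + (a / b) * v b|
        ≤ 4 * L * a / b ^ 2 + a / b ^ 2 + a / b ^ 2 := by
      calc |(k / a) * (v c / c - v b / b) + (a / b) * v b|
          ≤ c * |v c / c - v b / b| + a / b ^ 2 := hX
        _ ≤ (|v c - v b| + a / b ^ 2) + a / b ^ 2 := by linarith
        _ ≤ 4 * L * a / b ^ 2 + a / b ^ 2 + a / b ^ 2 := by linarith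
    calc |v a * ((k / a) * (v c / c - v b / b) + (a / b) * v b)|
        = v a * |(k / a) * (v c / c - v b / b) + (a / b) * v b| := by
          rw [abs_mul, abs_of_nonneg hA0]
      _ ≤ v a * (4 * L * a / b ^ 2 + a / b ^ 2 + a / b ^ 2) := by
          apply mul_le_mul_of_nonneg_left hXfull hA0
      _ = (a * v a) * ((4 * L + 2) / b ^ 2) := by ring
      _ ≤ 1 * ((4 * L + 2) / b ^ 2) := by
          apply mul_le_mul_of_nonneg_right hA1 (by positivity)
      _ = (4 * L + 2) / b ^ 2 := one_mul _
  -- combine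
  have hsum : |k / (a * c) * v a * v c + (a ^ 2 - k) / (b * a) * v b * v a
      + (c ^ 2 - k) / (c * b) * v c * v b| ≤ (4 * L + 4) / b ^ 2 := by
    calc |k / (a * c) * v a * v c + (a ^ 2 - k) / (b * a) * v b * v a
        + (c ^ 2 - k) / (c * b) * v c * v b|
        ≤ |k / (a * c) * v a * v c + (a ^ 2 - k) / (b * a) * v b * v a|
          + |(c ^ 2 - k) / (c * b) * v c * v b| := abs_add_le _ _
      _ ≤ (4 * L + 2) / b ^ 2 + 2 / b ^ 2 := by linarith
      _ = (4 * L + 4) / b ^ 2 := by ring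
  refine hsum.trans ?_
  rw [div_le_div_iff₀ (by positivity) (by positivity)]
  have h1 : a ^ 2 + b ^ 2 + c ^ 2 ≤ 6 * b ^ 2 := by nlinarith
  nlinarith [mul_le_mul_of_nonneg_left h1 (show (0:ℝ) ≤ 4 * L + 4 by linarith)]

lemma vol2 (r : ℝ) (hr : 0 ≤ r) :
    (volume (Metric.ball (0 : E2) r)).toReal = π * r ^ 2 := by
  rw [EuclideanSpace.volume_ball]
  simp only [Fintype.card_fin]
  rw [show ((2:ℕ):ℝ) / 2 + 1 = 2 by norm_num, Real.Gamma_two, div_one,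
    Real.sq_sqrt Real.pi_nonneg]
  rw [← ENNReal.ofReal_pow hr, ← ENNReal.ofReal_mul (by positivity),
    ENNReal.toReal_ofReal (by positivity)]
  ring

lemma key_vec (v : ℝ → ℝ) (L : ℝ) (hL : 1 ≤ L)
    (hv0 : ∀ r, 0 < r → 0 ≤ v r)
    (hv1 : ∀ r, 0 < r → r * v r ≤ 1)
    (hvlip : ∀ t s : ℝ, 0 < t → t ≤ s → |v s - v t| ≤ L * (s - t) / t ^ 2)
    (x y z : E2) (hxy : x ≠ y) (hyz : y ≠ z) (hzx : z ≠ x)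
    (h1 : ‖x - y‖ ≤ ‖y - z‖) (h2 : ‖x - y‖ ≤ ‖z - x‖) :
    |(⟪x - y, x - z⟫ / (‖x - y‖ * ‖x - z‖)) * v ‖x - y‖ * v ‖x - z‖
      + (⟪y - z, y - x⟫ / (‖y - z‖ * ‖y - x‖)) * v ‖y - z‖ * v ‖y - x‖
      + (⟪z - x, z - y⟫ / (‖z - x‖ * ‖z - y‖)) * v ‖z - x‖ * v ‖z - y‖|
    ≤ (24 * L + 24) / (‖x - y‖ ^ 2 + ‖y - z‖ ^ 2 + ‖z - x‖ ^ 2) := by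
  have exz : ‖x - z‖ = ‖z - x‖ := norm_sub_rev _ _
  have eyx : ‖y - x‖ = ‖x - y‖ := norm_sub_rev _ _
  have ezy : ‖z - y‖ = ‖y - z‖ := norm_sub_rev _ _
  have ha : 0 < ‖x - y‖ := norm_sub_pos_iff.2 hxy
  have hb : 0 < ‖y - z‖ := norm_sub_pos_iff.2 hyz
  have hc : 0 < ‖z - x‖ := norm_sub_pos_iff.2 hzx
  have hi2 : (⟪y - z, y - x⟫ : ℝ) = ‖x - y‖ ^ 2 - ⟪x - y, x - z⟫ := by
    have e1 : y - z = (x - z) - (x - y) := by abel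
    have e2 : y - x = -(x - y) := by abel
    rw [e1, e2, inner_sub_left, inner_neg_right, inner_neg_right,
      real_inner_comm (x - z) (x - y), real_inner_self_eq_norm_sq]
    ring
  have hi3 : (⟪z - x, z - y⟫ : ℝ) = ‖z - x‖ ^ 2 - ⟪x - y, x - z⟫ := by
    have e1 : z - x = -(x - z) := by abel
    have e2 : z - y = (x - y) - (x - z) := by abel
    rw [e1, e2, inner_neg_left, inner_sub_right, real_inner_comm (x - z) (x - y),
      real_inner_self_eq_norm_sq, norm_neg]
    ring
  rw [exz, eyx, ezy, hi2, hi3]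
  have hk1 : |(⟪x - y, x - z⟫ : ℝ)| ≤ ‖x - y‖ * ‖z - x‖ := by
    rw [← exz]; exact abs_real_inner_le_norm _ _
  have hk2 : |‖x - y‖ ^ 2 - (⟪x - y, x - z⟫ : ℝ)| ≤ ‖y - z‖ * ‖x - y‖ := by
    rw [← hi2, ← eyx]; exact abs_real_inner_le_norm _ _
  have hk3 : |‖z - x‖ ^ 2 - (⟪x - y, x - z⟫ : ℝ)| ≤ ‖z - x‖ * ‖y - z‖ := by
    rw [← hi3, ← ezy]; exact abs_real_inner_le_norm _ _
  have hbc : |‖y - z‖ - ‖z - x‖| ≤ ‖x - y‖ := by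
    have h := abs_norm_sub_norm_le (y - z) (x - z)
    have e : (y - z) - (x - z) = -(x - y) := by abel
    rw [e, norm_neg, exz] at h
    exact h
  exact key_scalar v L hL hv0 hv1 hvlip _ _ _ _ ha hb hc h1 h2 hk1 hk2 hk3 hbc

set_option maxHeartbeats 2000000 in
lemma v_props (χ : E2 → ℝ) (hχc : Continuous χ)
    (hχ_nonneg : ∀ x, 0 ≤ χ x)
    (hχ_mass : ∫ x, χ x = 1)
    (hχ_inner : ∀ x : E2, ‖x‖ ≤ 1 → χ x = 1 / Real.pi ^ 2)
    (hχ_outer : ∀ x : E2, 2 ≤ ‖x‖ → χ x = 0)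
    (B0 : ℝ) (hB0nn : 0 ≤ B0) (hB0 : ∀ x, χ x ≤ B0)
    (R : ℝ) (hR : 0 < R) (v : ℝ → ℝ)
    (hv1 : ∀ r : ℝ, 0 ≤ r → r ≤ R → v r = r / (Real.pi * R ^ 2))
    (hv2 : ∀ r : ℝ, R < r → r < 2 * R →
      v r = (1 / r) * ∫ y in Metric.ball (0 : E2) r, R ^ (-2 : ℤ) * χ (R⁻¹ • y))
    (hv3 : ∀ r : ℝ, 2 * R ≤ r → v r = 1 / r) :
    (∀ r, 0 < r → 0 ≤ v r) ∧ (∀ r, 0 < r → r * v r ≤ 1) ∧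
    (∀ t s : ℝ, 0 < t → t ≤ s → |v s - v t| ≤ (8 * π * B0 + 1) * (s - t) / t ^ 2) := by
  have hπ := Real.pi_pos
  have hπ1 : (1:ℝ) ≤ π := by linarith [Real.pi_gt_three]
  set g : E2 → ℝ := fun y => R ^ (-2 : ℤ) * χ (R⁻¹ • y) with hgdef
  have hzp : (R:ℝ) ^ (-2 : ℤ) = (R ^ 2)⁻¹ := by
    rw [zpow_neg, zpow_two, pow_two]
  have hRinv : (0:ℝ) < R⁻¹ := inv_pos.2 hR
  have hnorm_smul : ∀ y : E2, ‖R⁻¹ • y‖ = ‖y‖ / R := by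
    intro y
    rw [norm_smul, Real.norm_eq_abs, abs_of_pos hRinv, div_eq_inv_mul]
  have hg_cont : Continuous g := by
    exact continuous_const.mul (hχc.comp (continuous_const_smul _))
  have hg_nonneg : ∀ y, 0 ≤ g y := by
    intro y
    have : (0:ℝ) ≤ (R:ℝ) ^ (-2:ℤ) := by rw [hzp]; positivity
    exact mul_nonneg this (hχ_nonneg _)
  have hg_bound : ∀ y, g y ≤ (R ^ 2)⁻¹ * B0 := by
    intro y
    rw [hgdef]
    simp only
    rw [hzp]
    exact mul_le_mul_of_nonneg_left (hB0 _) (by positivity)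
  have hg_zero : ∀ y : E2, 2 * R ≤ ‖y‖ → g y = 0 := by
    intro y hy
    have : (2:ℝ) ≤ ‖R⁻¹ • y‖ := by
      rw [hnorm_smul, le_div_iff₀ hR]
      linarith
    simp only [hgdef]
    rw [hχ_outer _ this, mul_zero]
  have hg_supp : HasCompactSupport g := by
    apply HasCompactSupport.intro (isCompact_closedBall (0:E2) (2*R))
    intro y hy
    apply hg_zero
    have : ¬ dist y 0 ≤ 2 * R := by simpa [Metric.mem_closedBall] using hy
    rw [dist_zero_right] at this
    linarith
  have hg_int : Integrable g := hg_cont.integrable_of_hasCompactSupport hg_supp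
  have hg_total : ∫ y, g y = 1 := by
    have h1 : ∫ y, g y = R ^ (-2:ℤ) * ∫ y, χ (R⁻¹ • y) := by
      rw [hgdef]; exact integral_const_mul _ _
    have h2 : ∫ y : E2, χ (R⁻¹ • y) = |R ^ Module.finrank ℝ E2| • ∫ x, χ x :=
      Measure.integral_comp_inv_smul volume χ R
    rw [h1, h2, hχ_mass, finrank_euclideanSpace_fin, smul_eq_mul, mul_one,
      abs_of_pos (pow_pos hR 2), hzp]
    exact inv_mul_cancel₀ (by positivity)
  set m : ℝ → ℝ := fun r => ∫ y in Metric.ball (0:E2) r, g y with hmdef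
  have hm_mono : ∀ t s : ℝ, t ≤ s → m t ≤ m s := by
    intro t s hts
    exact setIntegral_mono_set hg_int.integrableOn
      (Filter.Eventually.of_forall hg_nonneg)
      (HasSubset.Subset.eventuallyLE (Metric.ball_subset_ball hts))
  have hm_nonneg : ∀ r, 0 ≤ m r := fun r =>
    setIntegral_nonneg measurableSet_ball (fun y _ => hg_nonneg y)
  have hm_le_one : ∀ r, m r ≤ 1 := by
    intro r
    calc m r ≤ ∫ y, g y := setIntegral_le_integral hg_int (Filter.Eventually.of_forall hg_nonneg)
      _ = 1 := hg_total
  have hm_R : m R = 1 / π := by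
    have hcong : ∀ y ∈ Metric.ball (0:E2) R, g y = (R ^ 2)⁻¹ * (1 / π ^ 2) := by
      intro y hy
      have hy' : ‖y‖ < R := by simpa [Metric.mem_ball, dist_zero_right] using hy
      have : ‖R⁻¹ • y‖ ≤ 1 := by
        rw [hnorm_smul, div_le_one hR]; linarith
      simp only [hgdef]
      rw [hχ_inner _ this, hzp]
    rw [hmdef]
    simp only
    rw [setIntegral_congr_fun measurableSet_ball hcong, setIntegral_const, smul_eq_mul,
      measureReal_def, vol2 R hR.le]
    field_simp
  have hm_2R : m (2 * R) = 1 := by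
    have hcompl : ∫ y in (Metric.ball (0:E2) (2*R))ᶜ, g y = 0 := by
      rw [setIntegral_congr_fun measurableSet_ball.compl
        (fun y hy => hg_zero y (by
          simpa [Metric.mem_ball, dist_zero_right, not_lt] using hy))]
      simp
    have hsplit := integral_add_compl (measurableSet_ball :
      MeasurableSet (Metric.ball (0:E2) (2*R))) hg_int
    rw [hmdef]
    simp only
    rw [← hg_total, ← hsplit, hcompl, add_zero]
  have hm_diff : ∀ t s : ℝ, 0 ≤ t → t ≤ s →
      m s - m t ≤ (R ^ 2)⁻¹ * B0 * (π * s ^ 2 - π * t ^ 2) := by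
    intro t s ht hts
    have hsubset := Metric.ball_subset_ball (x := (0:E2)) hts
    have hdiff_eq : m s - m t = ∫ y in Metric.ball (0:E2) s \ Metric.ball (0:E2) t, g y := by
      rw [hmdef]
      simp only
      rw [integral_diff measurableSet_ball hg_int.integrableOn hsubset]
    have hfin : volume (Metric.ball (0:E2) s \ Metric.ball (0:E2) t) < ⊤ :=
      lt_of_le_of_lt (measure_mono Set.diff_subset) measure_ball_lt_top
    have hmeas : volume (Metric.ball (0:E2) s \ Metric.ball (0:E2) t)
        = volume (Metric.ball (0:E2) s) - volume (Metric.ball (0:E2) t) :=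
      measure_diff hsubset measurableSet_ball.nullMeasurableSet measure_ball_lt_top.ne
    have hbound := norm_setIntegral_le_of_norm_le_const hfin
      (fun y _ => by
        rw [Real.norm_eq_abs, abs_of_nonneg (hg_nonneg y)]
        exact hg_bound y)
      (f := g) (μ := volume)
    have htor : (volume (Metric.ball (0:E2) s \ Metric.ball (0:E2) t)).toReal
        = π * s ^ 2 - π * t ^ 2 := by
      rw [hmeas, ENNReal.toReal_sub_of_le (measure_mono hsubset) measure_ball_lt_top.ne,
        vol2 s (ht.trans hts), vol2 t ht]
    calc m s - m t = ∫ y in Metric.ball (0:E2) s \ Metric.ball (0:E2) t, g y := hdiff_eq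
      _ ≤ |∫ y in Metric.ball (0:E2) s \ Metric.ball (0:E2) t, g y| := le_abs_self _
      _ = ‖∫ y in Metric.ball (0:E2) s \ Metric.ball (0:E2) t, g y‖ := (Real.norm_eq_abs _).symm
      _ ≤ (R ^ 2)⁻¹ * B0 * (volume (Metric.ball (0:E2) s \ Metric.ball (0:E2) t)).toReal :=
          hbound
      _ = (R ^ 2)⁻¹ * B0 * (π * s ^ 2 - π * t ^ 2) := by rw [htor]
  -- v on middle region
  have hvmid : ∀ r : ℝ, R ≤ r → r ≤ 2 * R → v r = m r / r := by
    intro r h1 h2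
    rcases eq_or_lt_of_le h1 with heq | h1'
    · rw [← heq, hv1 R hR.le le_rfl, hm_R]
      field_simp
    · rcases eq_or_lt_of_le h2 with heq | h2'
      · rw [heq, hv3 (2 * R) le_rfl, hm_2R]
      · rw [hv2 r h1' h2', hmdef]
        ring
  constructor
  · -- nonneg
    intro r hr
    rcases le_or_gt r R with h | h
    · rw [hv1 r hr.le h]; positivity
    · rcases le_or_gt r (2*R) with h2 | h2
      · rw [hvmid r h.le h2]
        exact div_nonneg (hm_nonneg r) hr.le
      · rw [hv3 r h2.le]; positivity
  constructor
  · -- r * v r ≤ 1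
    intro r hr
    rcases le_or_gt r R with h | h
    · have e : r * (r / (π * R ^ 2)) = r * r / (π * R ^ 2) := by ring
      rw [hv1 r hr.le h, e, div_le_one (by positivity)]
      nlinarith
    · rcases le_or_gt r (2*R) with h2 | h2
      · rw [hvmid r h.le h2, mul_div_cancel₀ _ (ne_of_gt hr)]
        exact hm_le_one r
      · rw [hv3 r h2.le, mul_one_div, div_self (ne_of_gt hr)]
  · -- Lipschitz
    set L : ℝ := 8 * π * B0 + 1 with hLdef
    have hL1 : (1:ℝ) ≤ L := by nlinarith
    have hL0 : (0:ℝ) ≤ L := by linarith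
    -- piece 1
    have hlip1 : ∀ t s : ℝ, 0 < t → t ≤ s → s ≤ R → |v s - v t| ≤ L * (s - t) / t ^ 2 := by
      intro t s ht hts hsR
      rw [hv1 s (by linarith) hsR, hv1 t (by linarith) (by linarith)]
      rw [div_sub_div_same, abs_of_nonneg (div_nonneg (by linarith) (by positivity))]
      rw [div_le_div_iff₀ (by positivity) (by positivity)]
      have h1 : t ^ 2 ≤ π * R ^ 2 := by nlinarith
      have hst : (0:ℝ) ≤ s - t := by linarith
      have k1 : (s - t) * t ^ 2 ≤ (s - t) * (π * R ^ 2) := mul_le_mul_of_nonneg_left h1 hst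
      have k2 : 0 ≤ (L - 1) * ((s - t) * (π * R ^ 2)) :=
        mul_nonneg (by linarith) (mul_nonneg hst (by positivity))
      nlinarith [k1, k2]
    -- piece 2
    have hlip2 : ∀ t s : ℝ, R ≤ t → t ≤ s → s ≤ 2 * R → |v s - v t| ≤ L * (s - t) / t ^ 2 := by
      intro t s htR hts hs2R
      have ht : 0 < t := lt_of_lt_of_le hR htR
      have hs : 0 < s := lt_of_lt_of_le ht hts
      rw [hvmid s (htR.trans hts) hs2R, hvmid t htR (by linarith)]
      have hid : m s / s - m t / t = (m s - m t) / s - m t * ((s - t) / (s * t)) := by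
        field_simp
        ring
      rw [hid]
      have hA : 0 ≤ (m s - m t) / s := div_nonneg (by linarith [hm_mono t s hts]) hs.le
      have hB : 0 ≤ m t * ((s - t) / (s * t)) :=
        mul_nonneg (hm_nonneg t) (div_nonneg (by linarith) (by positivity))
      have hAbound : (m s - m t) / s ≤ 8 * π * B0 * (s - t) / t ^ 2 := by
        have h1 : m s - m t ≤ (R ^ 2)⁻¹ * B0 * (π * s ^ 2 - π * t ^ 2) :=
          hm_diff t s ht.le hts
        rw [div_le_div_iff₀ hs (by positivity)]
        have e1 : π * s ^ 2 - π * t ^ 2 = π * (s + t) * (s - t) := by ring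
        have e2 : (R ^ 2)⁻¹ * B0 * (π * (s + t) * (s - t)) * t ^ 2
            ≤ 8 * π * B0 * (s - t) * s := by
          rw [inv_mul_eq_div, div_mul_eq_mul_div, div_mul_eq_mul_div,
            div_le_iff₀ (by positivity)]
          have hP : 0 ≤ B0 * π * (s - t) :=
            mul_nonneg (mul_nonneg hB0nn hπ.le) (by linarith)
          have ht4 : t ^ 2 ≤ 4 * R ^ 2 := by nlinarith
          have k1 : (s + t) * t ^ 2 ≤ 2 * s * (4 * R ^ 2) :=
            mul_le_mul (by linarith) ht4 (sq_nonneg t) (by positivity)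
          nlinarith [mul_le_mul_of_nonneg_left k1 hP]
        calc (m s - m t) * t ^ 2 ≤ (R ^ 2)⁻¹ * B0 * (π * s ^ 2 - π * t ^ 2) * t ^ 2 := by
              nlinarith [sq_nonneg t]
          _ = (R ^ 2)⁻¹ * B0 * (π * (s + t) * (s - t)) * t ^ 2 := by rw [e1]
          _ ≤ 8 * π * B0 * (s - t) * s := e2
      have hBbound : m t * ((s - t) / (s * t)) ≤ (s - t) / t ^ 2 := by
        have h1 : m t ≤ 1 := hm_le_one t
        have h2 : (s - t) / (s * t) ≤ (s - t) / t ^ 2 := by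
          rcases eq_or_lt_of_le hts with rfl | h
          · simp
          · exact div_le_div_of_nonneg_left (by linarith) (pow_pos ht 2) (by nlinarith)
        calc m t * ((s - t) / (s * t)) ≤ 1 * ((s - t) / (s * t)) := by
              apply mul_le_mul_of_nonneg_right h1 (div_nonneg (by linarith) (by positivity))
          _ = (s - t) / (s * t) := one_mul _
          _ ≤ (s - t) / t ^ 2 := h2
      calc |(m s - m t) / s - m t * ((s - t) / (s * t))|
          ≤ (m s - m t) / s + m t * ((s - t) / (s * t)) := by
            exact abs_sub_le_iff.mpr ⟨by linarith, by linarith⟩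
        _ ≤ 8 * π * B0 * (s - t) / t ^ 2 + (s - t) / t ^ 2 := by linarith
        _ = L * (s - t) / t ^ 2 := by rw [hLdef]; ring
    -- piece 3
    have hlip3 : ∀ t s : ℝ, 2 * R ≤ t → t ≤ s → |v s - v t| ≤ L * (s - t) / t ^ 2 := by
      intro t s ht2R hts
      have ht : 0 < t := lt_of_lt_of_le (by linarith) ht2R
      have hs : 0 < s := lt_of_lt_of_le ht hts
      rw [hv3 s (by linarith), hv3 t ht2R]
      have hid : (1:ℝ)/s - 1/t = -((s - t)/(s * t)) := by field_simp; ring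
      rw [hid, abs_neg, abs_of_nonneg (div_nonneg (by linarith) (by positivity))]
      calc (s - t)/(s * t) ≤ (s - t)/t^2 := by
            rcases eq_or_lt_of_le hts with rfl | h
            · simp
            · exact div_le_div_of_nonneg_left (by linarith) (pow_pos ht 2) (by nlinarith)
        _ ≤ L * (s - t) / t ^ 2 := by
            rw [div_le_div_iff₀ (by positivity) (by positivity)]
            nlinarith [mul_nonneg (mul_nonneg (sub_nonneg.2 hL1) (sub_nonneg.2 hts)) (sq_nonneg t)]
    -- stitch
    intro t s ht hts
    set p : ℝ := max t (min s R) with hpdef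
    set q : ℝ := max p (min s (2 * R)) with hqdef
    have htp : t ≤ p := le_max_left _ _
    have hpq : p ≤ q := le_max_left _ _
    have hps : p ≤ s := max_le hts (min_le_left _ _)
    have hqs : q ≤ s := max_le hps (min_le_left _ _)
    have hp : 0 < p := lt_of_lt_of_le ht htp
    have hq : 0 < q := lt_of_lt_of_le hp hpq
    have step1 : |v p - v t| ≤ L * (p - t) / t ^ 2 := by
      rcases eq_or_lt_of_le htp with heq | hlt
      · rw [← heq]; simp
      · have hpeq : p = min s R := by
          rcases max_choice t (min s R) with h' | h'
          · exfalso; rw [hpdef] at hlt; rw [h'] at hlt; exact lt_irrefl t hlt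
          · exact h'
        have hpR : p ≤ R := hpeq ▸ min_le_right _ _
        exact hlip1 t p ht htp hpR
    have step2 : |v q - v p| ≤ L * (q - p) / t ^ 2 := by
      rcases eq_or_lt_of_le hpq with heq | hlt
      · rw [← heq]; simp
      · have hqeq : q = min s (2 * R) := by
          rcases max_choice p (min s (2 * R)) with h' | h'
          · exfalso; rw [hqdef] at hlt; rw [h'] at hlt; exact lt_irrefl p hlt
          · exact h'
        have hq2R : q ≤ 2 * R := hqeq ▸ min_le_right _ _
        have hRp : R ≤ p := by
          rcases le_or_gt s R with hsR | hsR
          · exfalso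
            have : p = s := by
              rw [hpdef, min_eq_left hsR, max_eq_right hts]
            rw [this] at hlt
            exact absurd (hlt.trans_le hqs) (lt_irrefl s)
          · calc R = min s R := (min_eq_right hsR.le).symm
              _ ≤ p := hpdef ▸ le_max_right _ _
        have h0 := hlip2 p q hRp hpq hq2R
        calc |v q - v p| ≤ L * (q - p) / p ^ 2 := h0
          _ ≤ L * (q - p) / t ^ 2 := by
              rw [div_le_div_iff₀ (by positivity) (by positivity)]
              nlinarith [mul_le_mul_of_nonneg_left (pow_le_pow_left₀ ht.le htp 2)
                (mul_nonneg hL0 (sub_nonneg.2 hpq))]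
    have step3 : |v s - v q| ≤ L * (s - q) / t ^ 2 := by
      rcases eq_or_lt_of_le hqs with heq | hlt
      · rw [heq]; simp
      · have h2Rq : 2 * R ≤ q := by
          rcases le_or_gt s (2 * R) with hs2R | hs2R
          · exfalso
            have : s ≤ q := by
              calc s = min s (2 * R) := (min_eq_left hs2R).symm
                _ ≤ q := hqdef ▸ le_max_right _ _
            exact absurd (hlt.trans_le this) (lt_irrefl q)
          · calc 2 * R = min s (2 * R) := (min_eq_right hs2R.le).symm
              _ ≤ q := hqdef ▸ le_max_right _ _
        have h0 := hlip3 q s h2Rq hqs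
        calc |v s - v q| ≤ L * (s - q) / q ^ 2 := h0
          _ ≤ L * (s - q) / t ^ 2 := by
              rw [div_le_div_iff₀ (by positivity) (by positivity)]
              nlinarith [mul_le_mul_of_nonneg_left (pow_le_pow_left₀ ht.le (htp.trans hpq) 2)
                (mul_nonneg hL0 (sub_nonneg.2 hqs))]
    have hdecomp : v s - v t = (v s - v q) + (v q - v p) + (v p - v t) := by ring
    calc |v s - v t| = |(v s - v q) + (v q - v p) + (v p - v t)| := by rw [hdecomp]
      _ ≤ |(v s - v q) + (v q - v p)| + |v p - v t| := abs_add_le _ _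
      _ ≤ |v s - v q| + |v q - v p| + |v p - v t| := by
          linarith [abs_add_le (v s - v q) (v q - v p)]
      _ ≤ L * (s - q) / t ^ 2 + L * (q - p) / t ^ 2 + L * (p - t) / t ^ 2 := by linarith
      _ = L * (s - t) / t ^ 2 := by field_simp; ring


/-- Geometric estimate for the three-body term with the smeared interaction:
the cyclic sum of `((x-y)/|x-y|)·((x-z)/|x-z|) v(|x-y|)v(|x-z|)` is bounded by
`C/ρ²` with `C` independent of `R`, where `v` is the radial profile of `|∇w_R|`. -/
theorem three_body_cyclic_bound
    (χ : E2 → ℝ)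
    (hχ_smooth : ContDiff ℝ (⊤ : ℕ∞) χ)
    (hχ_radial : ∀ x y : E2, ‖x‖ = ‖y‖ → χ x = χ y)
    (hχ_nonneg : ∀ x, 0 ≤ χ x)
    (hχ_mass : ∫ x, χ x = 1)
    (hχ_inner : ∀ x : E2, ‖x‖ ≤ 1 → χ x = 1 / Real.pi ^ 2)
    (hχ_outer : ∀ x : E2, 2 ≤ ‖x‖ → χ x = 0) :
    ∃ C : ℝ, 0 < C ∧
      ∀ R : ℝ, 0 < R →
        ∀ v : ℝ → ℝ,
          (∀ r : ℝ, 0 ≤ r → r ≤ R → v r = r / (Real.pi * R ^ 2)) →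
          (∀ r : ℝ, R < r → r < 2 * R →
            v r = (1 / r) * ∫ y in Metric.ball (0 : E2) r, R ^ (-2 : ℤ) * χ (R⁻¹ • y)) →
          (∀ r : ℝ, 2 * R ≤ r → v r = 1 / r) →
          ∀ x y z : E2, x ≠ y → y ≠ z → z ≠ x →
            |(⟪x - y, x - z⟫ / (‖x - y‖ * ‖x - z‖)) * v ‖x - y‖ * v ‖x - z‖
              + (⟪y - z, y - x⟫ / (‖y - z‖ * ‖y - x‖)) * v ‖y - z‖ * v ‖y - x‖
              + (⟪z - x, z - y⟫ / (‖z - x‖ * ‖z - y‖)) * v ‖z - x‖ * v ‖z - y‖|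
            ≤ C / (‖x - y‖ ^ 2 + ‖y - z‖ ^ 2 + ‖z - x‖ ^ 2) := by
  have hχc : Continuous χ := hχ_smooth.continuous
  have hχsupp : HasCompactSupport χ := by
    apply HasCompactSupport.intro (isCompact_closedBall (0:E2) 2)
    intro x hx
    apply hχ_outer
    have : ¬ dist x 0 ≤ 2 := by simpa [Metric.mem_closedBall] using hx
    rw [dist_zero_right] at this; linarith
  obtain ⟨B0, hB0⟩ := hχsupp.exists_bound_of_continuous hχc
  have hB0' : ∀ x, χ x ≤ B0 := fun x => (le_abs_self _).trans ((Real.norm_eq_abs _) ▸ hB0 x)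
  have hB0nn : (0:ℝ) ≤ B0 := le_trans (norm_nonneg _) (hB0 0)
  have hπ := Real.pi_pos
  set L : ℝ := 8 * π * B0 + 1 with hLdef
  have hL1 : (1:ℝ) ≤ L := by nlinarith
  refine ⟨24 * L + 24, by linarith, ?_⟩
  intro R hR v hv1 hv2 hv3
  obtain ⟨hv0', hv1', hvlip⟩ := v_props χ hχc hχ_nonneg hχ_mass hχ_inner hχ_outer B0 hB0nn hB0'
    R hR v hv1 hv2 hv3
  intro x y z hxy hyz hzx
  have Kxyz := fun (h1 : ‖x - y‖ ≤ ‖y - z‖) (h2 : ‖x - y‖ ≤ ‖z - x‖) =>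
    key_vec v L hL1 hv0' hv1' hvlip x y z hxy hyz hzx h1 h2
  have Kyzx := fun (h1 : ‖y - z‖ ≤ ‖z - x‖) (h2 : ‖y - z‖ ≤ ‖x - y‖) =>
    key_vec v L hL1 hv0' hv1' hvlip y z x hyz hzx hxy h1 h2
  have Kzxy := fun (h1 : ‖z - x‖ ≤ ‖x - y‖) (h2 : ‖z - x‖ ≤ ‖y - z‖) =>
    key_vec v L hL1 hv0' hv1' hvlip z x y hzx hxy hyz h1 h2
  rcases le_total ‖x - y‖ ‖y - z‖ with h1 | h1 <;>
    rcases le_total ‖y - z‖ ‖z - x‖ with h2 | h2 <;>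
      rcases le_total ‖x - y‖ ‖z - x‖ with h3 | h3
  · exact Kxyz h1 h3
  · -- c ≤ a ≤ b ≤ c
    rw [show ‖x - y‖ ^ 2 + ‖y - z‖ ^ 2 + ‖z - x‖ ^ 2
        = ‖z - x‖ ^ 2 + ‖x - y‖ ^ 2 + ‖y - z‖ ^ 2 by ring, add_rotate, add_rotate]
    exact Kzxy h3 (by linarith)
  · exact Kxyz h1 h3
  · rw [show ‖x - y‖ ^ 2 + ‖y - z‖ ^ 2 + ‖z - x‖ ^ 2
        = ‖z - x‖ ^ 2 + ‖x - y‖ ^ 2 + ‖y - z‖ ^ 2 by ring, add_rotate, add_rotate]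
    exact Kzxy h3 h2
  · rw [show ‖x - y‖ ^ 2 + ‖y - z‖ ^ 2 + ‖z - x‖ ^ 2
        = ‖y - z‖ ^ 2 + ‖z - x‖ ^ 2 + ‖x - y‖ ^ 2 by ring, add_rotate]
    exact Kyzx h2 h1
  · rw [show ‖x - y‖ ^ 2 + ‖y - z‖ ^ 2 + ‖z - x‖ ^ 2
        = ‖y - z‖ ^ 2 + ‖z - x‖ ^ 2 + ‖x - y‖ ^ 2 by ring, add_rotate]
    exact Kyzx h2 h1
  · rw [show ‖x - y‖ ^ 2 + ‖y - z‖ ^ 2 + ‖z - x‖ ^ 2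
        = ‖z - x‖ ^ 2 + ‖x - y‖ ^ 2 + ‖y - z‖ ^ 2 by ring, add_rotate, add_rotate]
    exact Kzxy (by linarith) h2
  · rw [show ‖x - y‖ ^ 2 + ‖y - z‖ ^ 2 + ‖z - x‖ ^ 2
        = ‖z - x‖ ^ 2 + ‖x - y‖ ^ 2 + ‖y - z‖ ^ 2 by ring, add_rotate, add_rotate]
    exact Kzxy h3 h2
end
end

section
/- Suppose |x-y| ≤ 2R and |y-z|, |z-x| ≥ 2R for x, y, z ∈ ℝ². Then (1/2)|x-z| ≤ |y-z| ≤ 2|x-z|, and |(x-y)·(x-z)|z-y|² + (y-z)·(y-x)|x-z|² + (z-x)·(z-y)|x-y|²| ≤ C R² |x-z|² for a universal constant C. -/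
/-!
Write `u = x - y` (the short edge) and `v = x - z`. Expanding `z - y = u - v` turns the cyclic sum
into `2 (‖u‖²‖v‖² - ⟪u, v⟫²)`, twice the Gram determinant of `u` and `v`. By Cauchy–Schwarz this
lies between `0` and `2 ‖u‖²‖v‖² ≤ 8 R² ‖x - z‖²`, so `C = 8` works. The comparability of the two
long edges is the triangle inequality: the short edge is no longer than either of them.
-/

open RealInnerProductSpace
noncomputable section

section Triangle

variable {V : Type*} [SeminormedAddCommGroup V]

theorem norm_sub_le_two_mul_of_norm_sub_le {x y z : V} (h : ‖x - y‖ ≤ ‖x - z‖) :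
    ‖y - z‖ ≤ 2 * ‖x - z‖ := by
  have := norm_sub_le_norm_sub_add_norm_sub y x z
  rw [norm_sub_rev y x] at this
  linarith

end Triangle

section Gram

variable {V : Type*} [NormedAddCommGroup V] [InnerProductSpace ℝ V]

theorem real_inner_sq_le_norm_sq_mul_norm_sq (u v : V) : ⟪u, v⟫ ^ 2 ≤ ‖u‖ ^ 2 * ‖v‖ ^ 2 := by
  rw [← mul_pow, ← sq_abs]
  exact pow_le_pow_left₀ (abs_nonneg _) (abs_real_inner_le_norm u v) 2

theorem cyclic_inner_mul_norm_sq_eq (x y z : V) :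
    ⟪x - y, x - z⟫ * ‖z - y‖ ^ 2 + ⟪y - z, y - x⟫ * ‖x - z‖ ^ 2 + ⟪z - x, z - y⟫ * ‖x - y‖ ^ 2
      = 2 * (‖x - y‖ ^ 2 * ‖x - z‖ ^ 2 - ⟪x - y, x - z⟫ ^ 2) := by
  have hzy : z - y = (x - y) - (x - z) := by abel
  have hyz : y - z = (x - z) - (x - y) := by abel
  have hyx : y - x = -(x - y) := by abel
  have hzx : z - x = -(x - z) := by abel
  rw [hzy, hyz, hyx, hzx]
  generalize x - y = u, x - z = v
  simp only [norm_sub_sq_real, inner_sub_left, inner_sub_right, inner_neg_left, inner_neg_right,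
    real_inner_self_eq_norm_sq, real_inner_comm v u]
  ring

theorem abs_cyclic_inner_mul_norm_sq_le (x y z : V) :
    |⟪x - y, x - z⟫ * ‖z - y‖ ^ 2 + ⟪y - z, y - x⟫ * ‖x - z‖ ^ 2 + ⟪z - x, z - y⟫ * ‖x - y‖ ^ 2|
      ≤ 2 * ‖x - y‖ ^ 2 * ‖x - z‖ ^ 2 := by
  have hcs := real_inner_sq_le_norm_sq_mul_norm_sq (x - y) (x - z)
  rw [cyclic_inner_mul_norm_sq_eq, abs_of_nonneg (by linarith)]
  nlinarith [sq_nonneg ⟪x - y, x - z⟫]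

end Gram

/-- One short edge (`|x-y| ≤ 2R`), two long edges (`≥ 2R`): comparability of the long
edges and the key algebraic bound `|Σ_cyc (x-y)·(x-z)|z-y|²| ≤ C R² |x-z|²`. -/
theorem short_long_edges_bound :
    ∃ C : ℝ, 0 < C ∧
      ∀ R : ℝ, 0 < R → ∀ x y z : E2,
        ‖x - y‖ ≤ 2 * R → 2 * R ≤ ‖y - z‖ → 2 * R ≤ ‖z - x‖ →
          ((1 / 2) * ‖x - z‖ ≤ ‖y - z‖ ∧ ‖y - z‖ ≤ 2 * ‖x - z‖ ∧
            |⟪x - y, x - z⟫ * ‖z - y‖ ^ 2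
              + ⟪y - z, y - x⟫ * ‖x - z‖ ^ 2
              + ⟪z - x, z - y⟫ * ‖x - y‖ ^ 2|
            ≤ C * R ^ 2 * ‖x - z‖ ^ 2) := by
  refine ⟨8, by norm_num, fun R _ x y z hxy hyz hzx => ⟨?_, ?_, ?_⟩⟩
  · have : ‖y - x‖ ≤ ‖y - z‖ := by rw [norm_sub_rev]; linarith
    linarith [norm_sub_le_two_mul_of_norm_sub_le this]
  · exact norm_sub_le_two_mul_of_norm_sub_le (by rw [norm_sub_rev x z]; linarith)
  · calc _ ≤ 2 * ‖x - y‖ ^ 2 * ‖x - z‖ ^ 2 := abs_cyclic_inner_mul_norm_sq_le x y z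
      _ ≤ 2 * (2 * R) ^ 2 * ‖x - z‖ ^ 2 := by gcongr
      _ = 8 * R ^ 2 * ‖x - z‖ ^ 2 := by ring
end
end
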